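/- For k = m + n - 2ℓ with 0 ≤ ℓ ≤ min(m,n), the bidifferential operator R_{m,n}^k := Rest_{z=w} ∘ Σ_{j=0}^{ℓ} (-1)^{ℓ-j} [(m+j-ℓ)!(n-j)!]/[j!(m-ℓ)!(ℓ-j)!(n-ℓ)!] ∂^ℓ/(∂z^{ℓ-j} ∂w^j) maps Pol_m[z] ⊗ Pol_n[w] to Pol_k[z] and is a nonzero sl(2,ℂ)-homomorphism from V_m ⊗ V_n to V_k, where V_m is realized on polynomials of degree ≤ m. -/

import Mathlib

/-!
The operator is `Σ_j c_j F^{(ℓ-j)} G^{(j)}`. The actions of `X` and `H` pass through each term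
(for `H` because `k + 2ℓ = m + n`). For `Y`, the Leibniz rule leaves lower-order defect terms,
which telescope away because the coefficients satisfy the two-term recurrence
`c_j (ℓ-j)(ℓ-j-1-m) + c_{j+1} (j+1)(j-n) = 0`.

The degree bound then comes from the `Y`-equivariance: `Y_m^{m+1}` kills `Pol_m`, so
`Y_k^{m+n+2}` kills `R(F, G)`, whereas `Y_k` strictly raises the degree of every polynomial of
degree `> k`. Finally `R(1, z^ℓ) = c_ℓ ℓ!` is nonzero.
-/

open scoped TensorProduct
open Polynomial

noncomputable section

/-- Differentiation `d/dz` as an endomorphism of `ℂ[z]`. -/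
def Dop : Module.End ℂ (Polynomial ℂ) := Polynomial.derivative

/-- Multiplication by `z` as an endomorphism of `ℂ[z]`. -/
def Mz : Module.End ℂ (Polynomial ℂ) := LinearMap.mulLeft ℂ (Polynomial.X)

/-- The action of `H` on `Pol_m[z]`: `m - 2z d/dz`. -/
def Hop (m : ℕ) : Module.End ℂ (Polynomial ℂ) := (m:ℂ) • 1 - (2:ℂ) • (Mz ∘ₗ Dop)

/-- The action of `X` on `Pol_m[z]`: `-d/dz`. -/
def Xop : Module.End ℂ (Polynomial ℂ) := -Dop

/-- The action of `Y` on `Pol_m[z]`: `-mz + z² d/dz`. -/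
def Yop (m : ℕ) : Module.End ℂ (Polynomial ℂ) := -((m:ℂ) • Mz) + (Mz ∘ₗ Mz ∘ₗ Dop)

/-- The coefficient `(-1)^(ℓ-j) (m+j-ℓ)!(n-j)! / (j!(m-ℓ)!(ℓ-j)!(n-ℓ)!)`. -/
def coefRC (m n l j : ℕ) : ℂ :=
  (-1:ℂ)^(l-j) * ((Nat.factorial (m+j-l) : ℂ)) * ((Nat.factorial (n-j) : ℂ)) /
    ((Nat.factorial j : ℂ) * (Nat.factorial (m-l) : ℂ) *
     (Nat.factorial (l-j) : ℂ) * (Nat.factorial (n-l) : ℂ))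

/-- The finite-dimensional Rankin–Cohen operator, as a bilinear map:
`R_{m,n}^k(F,G) = Σ_j c_j · F^{(ℓ-j)}(z) G^{(j)}(z)` (restriction to `w = z` of the
bidifferential operator). -/
def RCbil (m n l : ℕ) : Polynomial ℂ →ₗ[ℂ] Polynomial ℂ →ₗ[ℂ] Polynomial ℂ :=
  ∑ j ∈ Finset.range (l+1),
    coefRC m n l j •
      (((LinearMap.mul ℂ (Polynomial ℂ)) ∘ₗ (Dop ^ (l - j))).compl₂ (Dop ^ j))

open Finset

theorem LinearMap.pow_add_apply₂_eq_zero_of_leibniz {R M N P : Type*} [CommSemiring R]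
    [AddCommMonoid M] [AddCommMonoid N] [AddCommMonoid P] [Module R M] [Module R N] [Module R P]
    (B : M →ₗ[R] N →ₗ[R] P) {A : Module.End R P} {A₁ : Module.End R M} {A₂ : Module.End R N}
    (hA : ∀ x y, A (B x y) = B (A₁ x) y + B x (A₂ y)) {a b : ℕ} {x : M} {y : N}
    (hx : (A₁ ^ a) x = 0) (hy : (A₂ ^ b) y = 0) : (A ^ (a + b)) (B x y) = 0 := by
  induction a generalizing x b y with
  | zero => simp_all
  | succ a iha =>
    induction b generalizing y with
    | zero => simp_all
    | succ b ihb =>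
      rw [← add_assoc, pow_succ, Module.End.mul_apply, hA, map_add,
        ihb (by rwa [← Module.End.mul_apply, ← pow_succ]), add_zero, add_right_comm]
      exact iha (by rwa [← Module.End.mul_apply, ← pow_succ]) hy

lemma Hop_apply (m : ℕ) (P : ℂ[X]) : Hop m P = (m : ℂ) • P - (2 : ℂ) • (X * derivative P) :=
  rfl

lemma Xop_apply (P : ℂ[X]) : Xop P = -derivative P :=
  rfl

lemma Yop_apply (m : ℕ) (P : ℂ[X]) : Yop m P = -((m : ℂ) • (X * P)) + X * (X * derivative P) :=
  rfl

lemma iterate_derivative_X_mul (a : ℕ) (P : ℂ[X]) :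
    derivative^[a] (X * P) = X * derivative^[a] P + (a : ℂ) • derivative^[a - 1] P := by
  rw [mul_comm, iterate_derivative_mul_X, mul_comm, Nat.cast_smul_eq_nsmul]

lemma iterate_derivative_X_mul_derivative (a : ℕ) (P : ℂ[X]) :
    derivative^[a] (X * derivative P) =
      X * derivative^[a + 1] P + (a : ℂ) • derivative^[a] P := by
  rw [mul_comm, iterate_derivative_derivative_mul_X, mul_comm, Nat.cast_smul_eq_nsmul]

lemma iterate_derivative_X_mul_X_mul_derivative (a : ℕ) (P : ℂ[X]) :
    derivative^[a] (X * (X * derivative P)) =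
      X * (X * derivative^[a + 1] P) + (2 * a : ℂ) • (X * derivative^[a] P) +
        ((a : ℂ) * (a - 1)) • derivative^[a - 1] P := by
  rw [iterate_derivative_X_mul, iterate_derivative_X_mul_derivative]
  cases a with
  | zero => simp
  | succ a =>
    rw [Nat.add_sub_cancel, iterate_derivative_X_mul_derivative]
    simp only [smul_eq_C_mul, map_mul, map_sub, map_one, map_natCast, map_ofNat]
    push_cast
    ring

lemma Xop_mul_iterate_derivative (a b : ℕ) (F G : ℂ[X]) :
    Xop (derivative^[a] F * derivative^[b] G) =
      derivative^[a] (Xop F) * derivative^[b] G +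
        derivative^[a] F * derivative^[b] (Xop G) := by
  simp only [Xop_apply, derivative_mul, iterate_derivative_neg, ← Function.iterate_succ_apply,
    ← Function.iterate_succ_apply']
  ring

lemma Hop_mul_iterate_derivative {m n k a b : ℕ} (hk : m + n = k + 2 * (a + b))
    (F G : ℂ[X]) :
    Hop k (derivative^[a] F * derivative^[b] G) =
      derivative^[a] (Hop m F) * derivative^[b] G +
        derivative^[a] F * derivative^[b] (Hop n G) := by
  have hk' : (m + n : ℂ[X]) = k + 2 * (a + b) := by exact_mod_cast hk
  simp only [Hop_apply, iterate_derivative_sub, iterate_derivative_smul,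
    iterate_derivative_X_mul_derivative, derivative_mul, ← Function.iterate_succ_apply']
  simp only [smul_eq_C_mul, map_natCast, map_ofNat]
  linear_combination (-(derivative^[a] F * derivative^[b] G)) * hk'

lemma Yop_mul_iterate_derivative {m n k a b : ℕ} (hk : m + n = k + 2 * (a + b))
    (F G : ℂ[X]) :
    derivative^[a] (Yop m F) * derivative^[b] G + derivative^[a] F * derivative^[b] (Yop n G) =
      Yop k (derivative^[a] F * derivative^[b] G) +
        ((a : ℂ) * (a - 1 - m)) • (derivative^[a - 1] F * derivative^[b] G) +
        ((b : ℂ) * (b - 1 - n)) • (derivative^[a] F * derivative^[b - 1] G) := by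
  have hk' : (m + n : ℂ[X]) = k + 2 * (a + b) := by exact_mod_cast hk
  simp only [Yop_apply, iterate_map_add, iterate_derivative_neg, iterate_derivative_smul,
    iterate_derivative_X_mul_X_mul_derivative, derivative_mul, ← Function.iterate_succ_apply']
  simp only [iterate_derivative_X_mul, smul_eq_C_mul, map_mul, map_sub, map_one, map_natCast,
    map_ofNat]
  linear_combination (-(X * derivative^[a] F * derivative^[b] G)) * hk'

def diagBidiff (c : ℕ → ℂ) (l : ℕ) : ℂ[X] →ₗ[ℂ] ℂ[X] →ₗ[ℂ] ℂ[X] :=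
  ∑ j ∈ range (l + 1), c j • ((LinearMap.mul ℂ ℂ[X] ∘ₗ Dop ^ (l - j)).compl₂ (Dop ^ j))

lemma RCbil_eq_diagBidiff (m n l : ℕ) : RCbil m n l = diagBidiff (coefRC m n l) l :=
  rfl

lemma diagBidiff_apply (c : ℕ → ℂ) (l : ℕ) (F G : ℂ[X]) :
    diagBidiff c l F G =
      ∑ j ∈ range (l + 1), c j • (derivative^[l - j] F * derivative^[j] G) := by
  simp [diagBidiff, Module.End.pow_apply, Dop]

lemma Xop_diagBidiff (c : ℕ → ℂ) (l : ℕ) (F G : ℂ[X]) :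
    Xop (diagBidiff c l F G) = diagBidiff c l (Xop F) G + diagBidiff c l F (Xop G) := by
  simp only [diagBidiff_apply, map_sum, map_smul, Xop_mul_iterate_derivative, smul_add,
    sum_add_distrib]

lemma Hop_diagBidiff {m n k l : ℕ} (hk : m + n = k + 2 * l) (c : ℕ → ℂ) (F G : ℂ[X]) :
    Hop k (diagBidiff c l F G) = diagBidiff c l (Hop m F) G + diagBidiff c l F (Hop n G) := by
  simp only [diagBidiff_apply, map_sum, map_smul, ← smul_add, ← sum_add_distrib]
  refine sum_congr rfl fun j hj => ?_
  rw [Hop_mul_iterate_derivative (m := m) (n := n) (k := k) (by grind)]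

lemma sum_Yop_defect_eq_zero {m n l : ℕ} {c : ℕ → ℂ}
    (hc : ∀ j < l, c j * (l - j) * (l - j - 1 - m) + c (j + 1) * (j + 1) * (j - n) = 0)
    (F G : ℂ[X]) :
    ∑ j ∈ range (l + 1), c j • (((l - j : ℕ) : ℂ) * ((l - j : ℕ) - 1 - m)) •
        (derivative^[l - j - 1] F * derivative^[j] G) +
      ∑ j ∈ range (l + 1), c j • ((j : ℂ) * (j - 1 - n)) •
        (derivative^[l - j] F * derivative^[j - 1] G) = 0 := by
  rw [sum_range_succ, sum_range_succ']
  simp only [Nat.sub_self, Nat.cast_zero, zero_mul, zero_smul, smul_zero, add_zero]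
  rw [← sum_add_distrib]
  refine sum_eq_zero fun j hj => ?_
  have hjl : j < l := mem_range.mp hj
  rw [Nat.add_sub_cancel, ← Nat.sub_sub, smul_smul, smul_smul, ← add_smul]
  convert zero_smul ℂ _
  push_cast [Nat.cast_sub hjl.le, Nat.cast_sub (show 1 ≤ l - j by omega)]
  linear_combination hc j hjl

lemma Yop_diagBidiff {m n k l : ℕ} (hk : m + n = k + 2 * l) {c : ℕ → ℂ}
    (hc : ∀ j < l, c j * (l - j) * (l - j - 1 - m) + c (j + 1) * (j + 1) * (j - n) = 0)
    (F G : ℂ[X]) :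
    Yop k (diagBidiff c l F G) = diagBidiff c l (Yop m F) G + diagBidiff c l F (Yop n G) := by
  simp only [diagBidiff_apply, ← sum_add_distrib, ← smul_add]
  rw [sum_congr rfl fun j hj => congrArg (c j • ·) <|
    Yop_mul_iterate_derivative (m := m) (n := n) (k := k) (by grind) F G]
  simp only [smul_add, sum_add_distrib]
  rw [add_assoc, sum_Yop_defect_eq_zero hc, add_zero, map_sum]
  simp only [map_smul]

lemma coefRC_ne_zero (m n l j : ℕ) : coefRC m n l j ≠ 0 := by
  simp [coefRC, Nat.factorial_ne_zero]

lemma coefRC_recurrence {m n l j : ℕ} (hm : l ≤ m) (hn : l ≤ n) (hj : j < l) :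
    coefRC m n l j * (l - j) * (l - j - 1 - m) + coefRC m n l (j + 1) * (j + 1) * (j - n) = 0 := by
  obtain ⟨i, rfl⟩ : ∃ i, l = j + 1 + i := ⟨l - (j + 1), by omega⟩
  obtain ⟨p, rfl⟩ : ∃ p, m = j + 1 + i + p := ⟨m - (j + 1 + i), by omega⟩
  obtain ⟨q, rfl⟩ : ∃ q, n = j + 1 + i + q := ⟨n - (j + 1 + i), by omega⟩
  simp only [coefRC, show j + 1 + i + p + j - (j + 1 + i) = p + j by omega,
    show j + 1 + i + p + (j + 1) - (j + 1 + i) = p + j + 1 by omega,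
    show j + 1 + i + q - j = q + i + 1 by omega, show j + 1 + i + q - (j + 1) = q + i by omega,
    show j + 1 + i - j = i + 1 by omega, show j + 1 + i - (j + 1) = i by omega,
    Nat.add_sub_cancel_left, Nat.factorial_succ, pow_succ]
  push_cast
  field_simp
  ring

lemma diagBidiff_one_X_pow (c : ℕ → ℂ) (l : ℕ) :
    diagBidiff c l 1 (X ^ l) = C (c l * l.factorial) := by
  rw [diagBidiff_apply, sum_range_succ, sum_eq_zero fun j hj => by
      rw [iterate_derivative_one (by grind), zero_mul, smul_zero],
    zero_add, Nat.sub_self, Function.iterate_zero_apply, one_mul,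
    iterate_derivative_X_pow_eq_smul, Nat.descFactorial_self, Nat.sub_self, pow_zero, smul_smul,
    smul_eq_C_mul, mul_one]

lemma coeff_Yop_zero (m : ℕ) (P : ℂ[X]) : (Yop m P).coeff 0 = 0 := by
  simp [Yop_apply]

lemma coeff_Yop_succ (m i : ℕ) (P : ℂ[X]) : (Yop m P).coeff (i + 1) = (i - m) * P.coeff i := by
  cases i with
  | zero => simp [Yop_apply]
  | succ i =>
    simp only [Yop_apply, coeff_add, coeff_neg, coeff_smul, coeff_X_mul, coeff_derivative,
      smul_eq_mul]
    push_cast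
    ring

lemma Yop_pow_apply_eq_zero {m : ℕ} {P : ℂ[X]} (hP : P.natDegree ≤ m) :
    (Yop m ^ (m + 1)) P = 0 := by
  have support : ∀ N i, ((Yop m ^ N) P).coeff i ≠ 0 → N ≤ i ∧ i ≤ m := by
    intro N
    induction N with
    | zero => exact fun i hi => ⟨i.zero_le, (le_natDegree_of_ne_zero hi).trans hP⟩
    | succ N ih =>
      rintro (_ | i) hi
      · simp [pow_succ', coeff_Yop_zero] at hi
      · rw [pow_succ', Module.End.mul_apply, coeff_Yop_succ] at hi
        obtain ⟨him, hNi⟩ := mul_ne_zero_iff.mp hi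
        have : i ≠ m := by rintro rfl; simp at him
        have := ih i hNi
        omega
  ext i
  by_contra hi
  have := support (m + 1) i hi
  omega

lemma coeff_Yop_pow_ne_zero {k d : ℕ} {P : ℂ[X]} (hd : k < d) (hP : P.coeff d ≠ 0) (N : ℕ) :
    ((Yop k ^ N) P).coeff (d + N) ≠ 0 := by
  induction N with
  | zero => simpa using hP
  | succ N ih =>
    rw [pow_succ', Module.End.mul_apply, ← add_assoc, coeff_Yop_succ]
    refine mul_ne_zero (sub_ne_zero.mpr ?_) ih
    exact_mod_cast (hd.trans_le (d.le_add_right N)).ne'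

lemma natDegree_le_of_Yop_pow_apply_eq_zero {k N : ℕ} {P : ℂ[X]} (h : (Yop k ^ N) P = 0) :
    P.natDegree ≤ k := by
  by_contra! hk
  have hP : P ≠ 0 := by rintro rfl; simp at hk
  exact coeff_Yop_pow_ne_zero hk (leadingCoeff_ne_zero.mpr hP) N (by rw [h, coeff_zero])

/-- **The finite-dimensional Rankin–Cohen operator is a nonzero symmetry breaking
operator `V_m ⊗ V_n → V_k`** for `k = m+n-2ℓ`, `0 ≤ ℓ ≤ min(m,n)`:
it maps `Pol_m[z] ⊗ Pol_n[w]` to `Pol_k[z]`, intertwines the `sl(2,ℂ)`-actions,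
and is nonzero. -/
theorem RC_is_SBO (m n l k : ℕ) (hm : l ≤ m) (hn : l ≤ n) (hk : m + n = k + 2*l) :
    (∀ F G : Polynomial ℂ, F.natDegree ≤ m → G.natDegree ≤ n →
      (RCbil m n l F G).natDegree ≤ k) ∧
    (∀ F G : Polynomial ℂ, F.natDegree ≤ m → G.natDegree ≤ n →
      Hop k (RCbil m n l F G) = RCbil m n l (Hop m F) G + RCbil m n l F (Hop n G) ∧
      Xop (RCbil m n l F G) = RCbil m n l (Xop F) G + RCbil m n l F (Xop G) ∧
      Yop k (RCbil m n l F G) = RCbil m n l (Yop m F) G + RCbil m n l F (Yop n G)) ∧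
    (∃ F G : Polynomial ℂ, F.natDegree ≤ m ∧ G.natDegree ≤ n ∧ RCbil m n l F G ≠ 0) := by
  have hY : ∀ F G, Yop k (RCbil m n l F G) = RCbil m n l (Yop m F) G + RCbil m n l F (Yop n G) :=
    Yop_diagBidiff hk fun j hj => coefRC_recurrence hm hn hj
  refine ⟨fun F G hF hG => ?_,
    fun F G _ _ => ⟨Hop_diagBidiff hk _ F G, Xop_diagBidiff _ _ F G, hY F G⟩,
    1, X ^ l, by simp, by simpa using hn, ?_⟩
  · exact natDegree_le_of_Yop_pow_apply_eq_zero <|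
      (RCbil m n l).pow_add_apply₂_eq_zero_of_leibniz hY
        (Yop_pow_apply_eq_zero hF) (Yop_pow_apply_eq_zero hG)
  · rw [RCbil_eq_diagBidiff, diagBidiff_one_X_pow]
    exact C_ne_zero.mpr <|
      mul_ne_zero (coefRC_ne_zero m n l l) (by exact_mod_cast l.factorial_ne_zero)
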